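/- Let G ⊆ ℝⁿ be an open set and f : G → ℝ a continuous function. Then the set of points x ∈ G at which all n partial derivatives of f exist but f is not Fréchet differentiable at x is a meager (first category) set. -/

import Mathlib

open Metric Set Topology Filter

/-!
Let `C ε r` (`slopeCauchySet f G ε r`) be the set of `x` with `ball x r ⊆ G` at which, for each
coordinate, the difference quotients of `f` with increments in the punctured ball of radius `r` are
pairwise `ε`-close. Since `f` is continuous, `C ε r` is closed, and if the partial derivatives exist
at `x` then for every `ε` the point `x` lies in some `C ε r`. If moreover `x` lies in the *interior*
of some `C ε r` for every `ε`, the difference quotients converge to the partial derivatives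
uniformly near `x`, and walking from `x` to `x + v` one coordinate at a time shows that `f` is
differentiable at `x`. So every point of the set in question lies on the frontier of one of the
countably many closed sets `C (1/(p+1)) (1/(q+1))`, and the frontier of a closed set is nowhere
dense.
-/

theorem isMeagre_iUnion_frontier {X ι κ : Type*} [TopologicalSpace X] [Countable ι] [Countable κ]
    {C : ι → κ → Set X} (hC : ∀ p q, IsClosed (C p q)) :
    IsMeagre (⋃ p, ⋃ q, frontier (C p q)) :=
  isMeagre_iUnion fun p => isMeagre_iUnion fun q =>
    (isClosed_frontier.isNowhereDense_iff.2 (interior_frontier (hC p q))).isMeagre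

section

variable {n : ℕ} {F : Type*} [NormedAddCommGroup F] [NormedSpace ℝ F]

def staircase (x v : Fin n → ℝ) (k : ℕ) : Fin n → ℝ :=
  x + fun j : Fin n => if (j : ℕ) < k then v j else 0

@[simp] theorem staircase_zero (x v : Fin n → ℝ) : staircase x v 0 = x := by
  ext j; simp [staircase]

theorem staircase_self (x v : Fin n → ℝ) : staircase x v n = x + v := by
  ext j; simp [staircase]

theorem staircase_succ (x v : Fin n → ℝ) (i : Fin n) :
    staircase x v (i + 1) = staircase x v i + Pi.single i (v i) := by
  ext j
  by_cases hji : j = i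
  · subst hji; simp [staircase]
  · have hji' : (j : ℕ) ≠ i := Fin.val_ne_of_ne hji
    simp [staircase, hji, le_iff_lt_or_eq, hji']

theorem tendsto_staircase (x : Fin n → ℝ) (k : ℕ) :
    Tendsto (fun v => staircase x v k) (𝓝 0) (𝓝 x) := by
  have : Continuous fun v => staircase x v k :=
    continuous_const.add (continuous_pi fun j : Fin n => by
      split_ifs
      exacts [continuous_apply j, continuous_const])
  convert this.tendsto 0
  ext j; simp [staircase]

theorem norm_sub_sub_sum_le_of_staircase (f : (Fin n → ℝ) → F) (x v : Fin n → ℝ)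
    (d : Fin n → F) {B : ℝ}
    (hB : ∀ i : Fin n,
      ‖f (staircase x v i + Pi.single i (v i)) - f (staircase x v i) - v i • d i‖ ≤ B) :
    ‖f (x + v) - f x - ∑ i, v i • d i‖ ≤ n * B := by
  have htelescope : f (x + v) - f x - ∑ i, v i • d i =
      ∑ i : Fin n,
        (f (staircase x v i + Pi.single i (v i)) - f (staircase x v i) - v i • d i) := by
    have := Finset.sum_range_sub (fun k => f (staircase x v k)) n
    rw [staircase_self, staircase_zero, Finset.sum_range] at this
    simp only [staircase_succ] at this
    rw [← this]
    simp only [Finset.sum_sub_distrib]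
  calc ‖f (x + v) - f x - ∑ i, v i • d i‖
      ≤ ∑ i : Fin n, ‖f (staircase x v i + Pi.single i (v i)) - f (staircase x v i) - v i • d i‖ :=
        htelescope ▸ norm_sum_le _ _
    _ ≤ n * B := by simpa using Finset.sum_le_sum fun i (_ : i ∈ Finset.univ) => hB i

/-- `(f (x + t • eᵢ) - f x) / t`, which is `0` at `t = 0`. -/
noncomputable def partialSlope (f : (Fin n → ℝ) → F) (x : Fin n → ℝ) (i : Fin n) : ℝ → F :=
  slope (fun t => f (x + Pi.single i t)) 0

theorem smul_partialSlope (f : (Fin n → ℝ) → F) (x : Fin n → ℝ) (i : Fin n) (t : ℝ) :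
    t • partialSlope f x i t = f (x + Pi.single i t) - f x := by
  convert sub_smul_slope (fun t => f (x + Pi.single i t)) 0 t using 1 <;> simp [partialSlope]

theorem tendsto_partialSlope_of_hasDerivAt {f : (Fin n → ℝ) → F} {x : Fin n → ℝ} {i : Fin n}
    {d : F} (hd : HasDerivAt (fun t => f (Function.update x i t)) d (x i)) :
    Tendsto (partialSlope f x i) (𝓝[≠] 0) (𝓝 d) := by
  have hshift :
      (fun u : ℝ => f (Function.update x i (u + x i))) = fun u => f (x + Pi.single i u) := by
    ext u
    congr 1
    ext j
    by_cases hji : j = i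
    · subst hji; simp [add_comm]
    · simp [hji]
  rw [partialSlope, ← hasDerivAt_iff_tendsto_slope, ← hshift]
  exact HasDerivAt.comp_add_const 0 (x i) (by simpa using hd)

theorem hasFDerivAt_of_tendsto_partialSlope {f : (Fin n → ℝ) → F} {x : Fin n → ℝ} {d : Fin n → F}
    (hd : ∀ i, Tendsto (fun p : (Fin n → ℝ) × ℝ => partialSlope f p.1 i p.2)
      (𝓝 x ×ˢ 𝓝[≠] 0) (𝓝 (d i))) :
    HasFDerivAt f (∑ i, (ContinuousLinearMap.proj i : (Fin n → ℝ) →L[ℝ] ℝ).smulRight (d i)) x := by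
  rw [hasFDerivAt_iff_isLittleO_nhds_zero, Asymptotics.isLittleO_iff]
  intro c hc
  set ε := c / (n + 1) with hε_def
  have hε : 0 < ε := by positivity
  have hslope : ∀ᶠ p in 𝓝 x ×ˢ 𝓝[≠] 0, ∀ i, dist (partialSlope f p.1 i p.2) (d i) < ε :=
    eventually_all.2 fun i => Metric.tendsto_nhds.1 (hd i) ε hε
  obtain ⟨P, hP, Q, hQ, hPQ⟩ := eventually_prod_iff.1 hslope
  have hcorners : ∀ᶠ v in 𝓝 0, ∀ i : Fin n, P (staircase x v i) :=
    eventually_all.2 fun i => tendsto_staircase x i hP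
  have hQ' : ∀ᶠ t in 𝓝 (0 : ℝ), t ≠ 0 → Q t := eventually_nhdsWithin_iff.1 hQ
  have hsteps : ∀ᶠ v : Fin n → ℝ in 𝓝 0, ∀ i, v i ≠ 0 → Q (v i) :=
    eventually_all.2 fun i => ((continuous_apply i).tendsto (0 : Fin n → ℝ)).eventually hQ'
  filter_upwards [hcorners, hsteps] with v hPv hQv
  have hstep : ∀ i : Fin n, ‖f (staircase x v i + Pi.single i (v i)) - f (staircase x v i)
      - v i • d i‖ ≤ ε * ‖v‖ := by
    intro i
    rcases eq_or_ne (v i) 0 with hvi | hvi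
    · simp only [hvi, Pi.single_zero, add_zero, sub_self, zero_smul, norm_zero]
      positivity
    rw [← smul_partialSlope, ← smul_sub, norm_smul, mul_comm, ← dist_eq_norm]
    exact mul_le_mul (hPQ (hPv i) (hQv i hvi) i).le (norm_le_pi_norm v i) (norm_nonneg _) hε.le
  simp only [_root_.sum_apply, ContinuousLinearMap.smulRight_apply,
    ContinuousLinearMap.proj_apply]
  calc ‖f (x + v) - f x - ∑ i, v i • d i‖
      ≤ n * (ε * ‖v‖) := norm_sub_sub_sum_le_of_staircase f x v d hstep
    _ ≤ c * ‖v‖ := by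
      rw [← mul_assoc]
      gcongr
      rw [hε_def, mul_div_assoc']
      exact div_le_of_le_mul₀ (by positivity) hc.le (by linarith)

theorem isClosed_setOf_ball_subset {X : Type*} [PseudoMetricSpace X] (G : Set X) (r : ℝ) :
    IsClosed {x | ball x r ⊆ G} := by
  have : {x | ball x r ⊆ G} = (thickening r Gᶜ)ᶜ := by
    ext x
    simp only [mem_ofPred_eq, subset_def, mem_ball, mem_compl_iff, mem_thickening_iff, dist_comm]
    simp only [not_exists, not_and]
    exact forall_congr' fun z => not_imp_not.symm
  rw [this]
  exact isOpen_thickening.isClosed_compl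

theorem add_single_mem_ball (y : Fin n → ℝ) (i : Fin n) {t r : ℝ} (ht : |t| < r) :
    y + Pi.single i t ∈ ball y r := by
  simpa [dist_eq_norm, Pi.norm_single] using ht

theorem continuousOn_partialSlope {f : (Fin n → ℝ) → F} {G : Set (Fin n → ℝ)}
    (hf : ContinuousOn f G) (i : Fin n) {s r : ℝ} (hs : |s| < r) :
    ContinuousOn (fun y => partialSlope f y i s) {y | ball y r ⊆ G} := by
  have hshift : ∀ t, |t| < r → ContinuousOn (fun y => f (y + Pi.single i t)) {y | ball y r ⊆ G} :=
    fun t ht => hf.comp (continuous_add_const _).continuousOn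
      fun y hy => hy (add_single_mem_ball y i ht)
  exact ((hshift s hs).sub (hshift 0 (by simpa using (abs_nonneg s).trans_lt hs))).const_smul _

def slopeCauchySet (f : (Fin n → ℝ) → F) (G : Set (Fin n → ℝ)) (ε r : ℝ) : Set (Fin n → ℝ) :=
  {x | ball x r ⊆ G ∧ ∀ i s t, s ≠ 0 → t ≠ 0 → |s| < r → |t| < r →
    dist (partialSlope f x i s) (partialSlope f x i t) ≤ ε}

theorem slopeCauchySet_mono {f : (Fin n → ℝ) → F} {G : Set (Fin n → ℝ)} {ε ε' r r' : ℝ}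
    (hε : ε ≤ ε') (hr : r' ≤ r) : slopeCauchySet f G ε r ⊆ slopeCauchySet f G ε' r' :=
  fun _ ⟨hG, hx⟩ => ⟨(ball_subset_ball hr).trans hG, fun i s t hs ht hsr htr =>
    (hx i s t hs ht (hsr.trans_le hr) (htr.trans_le hr)).trans hε⟩

theorem isClosed_slopeCauchySet {f : (Fin n → ℝ) → F} {G : Set (Fin n → ℝ)}
    (hf : ContinuousOn f G) (ε r : ℝ) : IsClosed (slopeCauchySet f G ε r) := by
  set K := {x | ball x r ⊆ G}
  have hK : IsClosed K := isClosed_setOf_ball_subset G r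
  have : slopeCauchySet f G ε r = K ∩ ⋂ (i) (s) (t) (_ : s ≠ 0 ∧ t ≠ 0 ∧ |s| < r ∧ |t| < r),
      {x ∈ K | dist (partialSlope f x i s) (partialSlope f x i t) ≤ ε} := by
    ext x
    simp only [slopeCauchySet, mem_inter_iff, mem_iInter, mem_ofPred_eq, K]
    grind
  rw [this]
  refine hK.inter (isClosed_iInter fun i => isClosed_iInter fun s => isClosed_iInter fun t =>
    isClosed_iInter fun ⟨_, _, hs, ht⟩ => hK.isClosed_le ?_ continuousOn_const)
  exact continuous_dist.comp_continuousOn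
    ((continuousOn_partialSlope hf i hs).prodMk (continuousOn_partialSlope hf i ht))

theorem exists_mem_slopeCauchySet {f : (Fin n → ℝ) → F} {G : Set (Fin n → ℝ)} (hG : IsOpen G)
    {x : Fin n → ℝ} (hx : x ∈ G) {d : Fin n → F}
    (hd : ∀ i, Tendsto (partialSlope f x i) (𝓝[≠] 0) (𝓝 (d i))) {ε : ℝ} (hε : 0 < ε) :
    ∃ r > 0, x ∈ slopeCauchySet f G ε r := by
  have hnear : ∀ᶠ t in 𝓝[≠] 0, ∀ i, dist (partialSlope f x i t) (d i) < ε / 2 :=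
    eventually_all.2 fun i => Metric.tendsto_nhds.1 (hd i) _ (half_pos hε)
  obtain ⟨δ, hδ, hδnear⟩ := Metric.eventually_nhds_iff.1 (eventually_nhdsWithin_iff.1 hnear)
  obtain ⟨ρ, hρ, hρG⟩ := Metric.isOpen_iff.1 hG x hx
  refine ⟨min δ ρ, lt_min hδ hρ, (ball_subset_ball (min_le_right _ _)).trans hρG,
    fun i s t hs ht hsr htr => ?_⟩
  have hsδ : dist s 0 < δ := by simpa using hsr.trans_le (min_le_left _ _)
  have htδ : dist t 0 < δ := by simpa using htr.trans_le (min_le_left _ _)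
  linarith [dist_triangle_right (partialSlope f x i s) (partialSlope f x i t) (d i),
    hδnear hsδ hs i, hδnear htδ ht i]

theorem tendsto_partialSlope_of_forall_mem_interior {f : (Fin n → ℝ) → F}
    {G : Set (Fin n → ℝ)} (hf : ContinuousOn f G) {x : Fin n → ℝ} {i : Fin n} {d : F}
    (hd : Tendsto (partialSlope f x i) (𝓝[≠] 0) (𝓝 d))
    (hint : ∀ ε > 0, ∃ r > 0, x ∈ interior (slopeCauchySet f G ε r)) :
    Tendsto (fun p : (Fin n → ℝ) × ℝ => partialSlope f p.1 i p.2) (𝓝 x ×ˢ 𝓝[≠] 0) (𝓝 d) := by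
  refine Metric.tendsto_nhds.2 fun ε hε => ?_
  obtain ⟨r, hr, hxr⟩ := hint (ε / 3) (by positivity)
  have hne : ∀ᶠ t in 𝓝[≠] (0 : ℝ), t ≠ 0 := self_mem_nhdsWithin
  have hlt : ∀ᶠ t in 𝓝[≠] (0 : ℝ), |t| < r :=
    nhdsWithin_le_nhds (by simpa [ball, Real.dist_eq] using Metric.ball_mem_nhds (0 : ℝ) hr)
  have hsmall := hne.and hlt
  obtain ⟨s, hsd, hs, hsr⟩ :=
    ((Metric.tendsto_nhds.1 hd (ε / 3) (by positivity)).and hsmall).exists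
  have hcont : ContinuousAt (fun y => partialSlope f y i s) x :=
    (continuousOn_partialSlope hf i hsr).continuousAt
      (mem_of_superset (mem_interior_iff_mem_nhds.1 hxr) fun y hy => hy.1)
  have hy : ∀ᶠ y in 𝓝 x, y ∈ slopeCauchySet f G (ε / 3) r ∧
      dist (partialSlope f y i s) (partialSlope f x i s) < ε / 3 :=
    Eventually.and (mem_interior_iff_mem_nhds.1 hxr)
      (Metric.tendsto_nhds.1 hcont _ (by positivity))
  filter_upwards [hy.prod_mk hsmall] with ⟨y, t⟩ ⟨⟨hyC, hys⟩, ht, htr⟩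
  calc dist (partialSlope f y i t) d
      ≤ dist (partialSlope f y i t) (partialSlope f y i s)
        + dist (partialSlope f y i s) (partialSlope f x i s) + dist (partialSlope f x i s) d :=
        dist_triangle4 _ _ _ _
    _ < ε / 3 + ε / 3 + ε / 3 :=
        add_lt_add (add_lt_add_of_le_of_lt (hyC.2 i t s ht hs htr hsr) hys) hsd
    _ = ε := by ring

end

theorem meagre_partials_exist_not_differentiable
    (n : ℕ) (G : Set (Fin n → ℝ)) (hG : IsOpen G)
    (f : (Fin n → ℝ) → ℝ) (hf : ContinuousOn f G) :
    IsMeagre {x ∈ G |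
      (∀ i : Fin n, ∃ d : ℝ, HasDerivAt (fun t : ℝ => f (Function.update x i t)) d (x i)) ∧
      ¬ DifferentiableAt ℝ f x} := by
  let C (p q : ℕ) := slopeCauchySet f G (1 / (p + 1)) (1 / (q + 1))
  have hmeagre : IsMeagre (⋃ p, ⋃ q, frontier (C p q)) :=
    isMeagre_iUnion_frontier fun p q => isClosed_slopeCauchySet hf _ _
  refine hmeagre.mono ?_
  rintro x ⟨hxG, hpartial, hndiff⟩
  choose d hd using hpartial
  have hslope i := tendsto_partialSlope_of_hasDerivAt (hd i)
  obtain ⟨p, hp⟩ : ∃ p : ℕ, ∀ q : ℕ, x ∉ interior (C p q) := by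
    by_contra! hint
    refine hndiff (hasFDerivAt_of_tendsto_partialSlope fun i =>
      tendsto_partialSlope_of_forall_mem_interior hf (hslope i) fun ε hε => ?_).differentiableAt
    obtain ⟨p, hp⟩ := exists_nat_one_div_lt hε
    obtain ⟨q, hq⟩ := hint p
    exact ⟨_, Nat.one_div_pos_of_nat, interior_mono (slopeCauchySet_mono hp.le le_rfl) hq⟩
  obtain ⟨r, hr, hxr⟩ := exists_mem_slopeCauchySet hG hxG hslope (Nat.one_div_pos_of_nat (n := p))
  obtain ⟨q, hq⟩ := exists_nat_one_div_lt hr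
  exact mem_iUnion₂.2 ⟨p, q, subset_closure (slopeCauchySet_mono le_rfl hq.le hxr), hp q⟩
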